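/- arXiv:2511.15306 — 2 statements merged into one kernel-verified Lean document; each statement's English description precedes it below -/
import Mathlib

section
/- Let A be a real n×n matrix and H a positive definite real symmetric n×n matrix such that H·A is symmetric. Then A is diagonalizable over ℝ. -/
/-!
Let `S = √H`. Then `S A S⁻¹ = S⁻¹ (H A) S⁻¹` is symmetric, so by the spectral theorem it is
orthogonally diagonalizable, and hence `A`, being similar to it, is diagonalizable.
-/

open Matrix

namespace Matrix

variable {n R 𝕜 : Type*} [Fintype n] [DecidableEq n]

def IsDiagonalizable [CommRing R] (A : Matrix n n R) : Prop :=
  ∃ P D : Matrix n n R, IsUnit P ∧ D.IsDiag ∧ A = P * D * P⁻¹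

theorem IsDiagonalizable.conj [CommRing R] {A S : Matrix n n R} (hA : A.IsDiagonalizable)
    (hS : IsUnit S) : (S * A * S⁻¹).IsDiagonalizable := by
  obtain ⟨P, D, hP, hD, rfl⟩ := hA
  exact ⟨S * P, D, hS.mul hP, hD, by simp only [mul_inv_rev, mul_assoc]⟩

theorem IsHermitian.isDiagonalizable [RCLike 𝕜] {A : Matrix n n 𝕜} (hA : A.IsHermitian) :
    A.IsDiagonalizable := by
  refine ⟨hA.eigenvectorUnitary, diagonal (RCLike.ofReal ∘ hA.eigenvalues), Unitary.isUnit_coe,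
    isDiag_diagonal _, ?_⟩
  rw [inv_eq_left_inv (Unitary.coe_star_mul_self _)]
  exact hA.spectral_theorem

theorem isHermitian_mul_mul_inv_of_isHermitian_mul_self_mul [CommRing R] [StarRing R]
    {S A : Matrix n n R} (hS : S.IsHermitian) (hSu : IsUnit S) (hSSA : (S * S * A).IsHermitian) :
    (S * A * S⁻¹).IsHermitian := by
  have hdet : IsUnit S.det := (isUnit_iff_isUnit_det S).mp hSu
  have h : S * A * S⁻¹ = S⁻¹ᴴ * (S * S * A) * S⁻¹ := by
    rw [conjTranspose_nonsing_inv, hS.eq, mul_assoc S S A, nonsing_inv_mul_cancel_left _ _ hdet]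
  rw [h]
  exact isHermitian_conjTranspose_mul_mul _ hSSA

open scoped MatrixOrder ComplexOrder in
theorem PosDef.isDiagonalizable_of_isHermitian_mul [RCLike 𝕜] {H A : Matrix n n 𝕜}
    (hH : H.PosDef) (hHA : (H * A).IsHermitian) : A.IsDiagonalizable := by
  set S := CFC.sqrt H
  have hS : S.IsHermitian := (nonneg_iff_posSemidef.mp (CFC.sqrt_nonneg H)).isHermitian
  have hSS : S * S = H := CFC.sqrt_mul_sqrt_self H hH.posSemidef.nonneg
  have hSu : IsUnit S := (CFC.isUnit_sqrt_iff H hH.posSemidef.nonneg).mpr hH.isUnit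
  have hB : (S * A * S⁻¹).IsHermitian :=
    isHermitian_mul_mul_inv_of_isHermitian_mul_self_mul hS hSu (hSS ▸ hHA)
  have hdet : IsUnit S.det := (isUnit_iff_isUnit_det S).mp hSu
  have hA : A = S⁻¹ * (S * A * S⁻¹) * S⁻¹⁻¹ := by
    rw [nonsing_inv_nonsing_inv _ hdet]
    simp only [mul_assoc, nonsing_inv_mul _ hdet, mul_one, nonsing_inv_mul_cancel_left _ _ hdet]
  rw [hA]
  exact hB.isDiagonalizable.conj (isUnit_nonsing_inv_iff.mpr hSu)

end Matrix

theorem stmt_5 (n : ℕ) (A H : Matrix (Fin n) (Fin n) ℝ)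
    (hH : H.PosDef) (hsym : (H * A)ᵀ = H * A) :
    ∃ (P D : Matrix (Fin n) (Fin n) ℝ), IsUnit P ∧ D.IsDiag ∧ A = P * D * P⁻¹ :=
  PosDef.isDiagonalizable_of_isHermitian_mul hH <| by
    rwa [IsHermitian, conjTranspose_eq_transpose_of_trivial]
end

section
/- With notation as in the construction: let σ: U → ℝⁿ, B, C: U → M_{n×n}(ℝ), P, Q row-vector valued smooth maps with C(u) − Dσ(u)·B(u) invertible on U, and define α(u) = (P(u) − Q(σ(u))·B(u) − uᵀ·DQ(σ(u))·C(u))·(C(u) − Dσ(u)·B(u))⁻¹ and r̃(u,v) = Q(v)·u + α(u)·(v − σ(u)). Then along the graph {v = σ(u)}: (∇_u r̃)(u,σ(u))·B(u) + (∇_v r̃)(u,σ(u))·C(u) = P(u) for all u ∈ U. -/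
open Matrix

/-- The Jacobian matrix of a map `f : ℝⁿ → ℝⁿ` at a point: entry `(j,k)` is `∂f_j/∂x_k`. -/
noncomputable def jac (n : ℕ) (f : (Fin n → ℝ) → (Fin n → ℝ)) (x : Fin n → ℝ) :
    Matrix (Fin n) (Fin n) ℝ :=
  Matrix.of fun j k => fderiv ℝ f x (Pi.single k 1) j

section aux
variable {E : Type*} [NormedAddCommGroup E] [NormedSpace ℝ E]

lemma aux_contDiffAt_det {m : ℕ} {A : E → Matrix (Fin m) (Fin m) ℝ} {x : E}
    (h : ∀ i j, ContDiffAt ℝ (⊤ : ℕ∞) (fun y => A y i j) x) :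
    ContDiffAt ℝ (⊤ : ℕ∞) (fun y => (A y).det) x := by
  simp only [Matrix.det_apply']
  exact ContDiffAt.sum fun s _ =>
    (contDiffAt_const.mul (contDiffAt_prod fun i _ => h (s i) i))

lemma aux_contDiffAt_adjugate {m : ℕ} {A : E → Matrix (Fin m) (Fin m) ℝ} {x : E}
    (h : ∀ i j, ContDiffAt ℝ (⊤ : ℕ∞) (fun y => A y i j) x) (i j : Fin m) :
    ContDiffAt ℝ (⊤ : ℕ∞) (fun y => (A y).adjugate i j) x := by
  simp only [Matrix.adjugate_apply]
  refine aux_contDiffAt_det fun a b => ?_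
  simp only [Matrix.updateRow_apply]
  by_cases hab : a = j <;>
    simp only [hab, if_pos, if_true, if_neg, ite_true, ite_false] <;>
    first | exact contDiffAt_const | exact h a b

lemma aux_contDiffAt_inv {m : ℕ} {A : E → Matrix (Fin m) (Fin m) ℝ} {x : E}
    (h : ∀ i j, ContDiffAt ℝ (⊤ : ℕ∞) (fun y => A y i j) x) (hx : IsUnit (A x)) (i j : Fin m) :
    ContDiffAt ℝ (⊤ : ℕ∞) (fun y => (A y)⁻¹ i j) x := by
  have hdet : (A x).det ≠ 0 := ((Matrix.isUnit_iff_isUnit_det _).mp hx).ne_zero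
  have : (fun y => (A y)⁻¹ i j) = fun y => (A y).det⁻¹ * (A y).adjugate i j := by
    funext y
    rw [Matrix.inv_def, Matrix.smul_apply, Ring.inverse_eq_inv', smul_eq_mul]
  rw [this]
  exact ((aux_contDiffAt_det h).inv hdet).mul (aux_contDiffAt_adjugate h i j)
end aux

theorem stmt_17 (n : ℕ) (U : Set (Fin n → ℝ)) (hU : IsOpen U)
    (σ P Q : (Fin n → ℝ) → (Fin n → ℝ))
    (B C : (Fin n → ℝ) → Matrix (Fin n) (Fin n) ℝ)
    (hσ : ContDiffOn ℝ (⊤ : ℕ∞) σ U) (hP : ContDiffOn ℝ (⊤ : ℕ∞) P U) (hQ : ContDiffOn ℝ (⊤ : ℕ∞) Q U)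
    (hB : ∀ j k, ContDiffOn ℝ (⊤ : ℕ∞) (fun u => B u j k) U)
    (hC : ∀ j k, ContDiffOn ℝ (⊤ : ℕ∞) (fun u => C u j k) U)
    (hσU : ∀ u ∈ U, σ u ∈ U)
    (hinv : ∀ u ∈ U, IsUnit (C u - jac n σ u * B u))
    (α : (Fin n → ℝ) → (Fin n → ℝ))
    (hα : ∀ u ∈ U, α u =
      Matrix.vecMul
        (P u - Matrix.vecMul (Q (σ u)) (B u)
          - Matrix.vecMul (Matrix.vecMul u (jac n Q (σ u))) (C u))
        ((C u - jac n σ u * B u)⁻¹))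
    (r : (Fin n → ℝ) × (Fin n → ℝ) → ℝ)
    (hr : ∀ u v : Fin n → ℝ,
      r (u, v) = ∑ j, Q v j * u j + ∑ j, α u j * (v j - σ u j)) :
    ∀ u ∈ U,
      Matrix.vecMul (fun k => fderiv ℝ r (u, σ u) (Pi.single k 1, 0)) (B u)
        + Matrix.vecMul (fun k => fderiv ℝ r (u, σ u) (0, Pi.single k 1)) (C u)
        = P u := by
  -- jacobian entries are smooth
  have hjac : ∀ (f : (Fin n → ℝ) → (Fin n → ℝ)), ContDiffOn ℝ (⊤ : ℕ∞) f U →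
      ∀ x ∈ U, ∀ i j, ContDiffAt ℝ (⊤ : ℕ∞) (fun y => jac n f y i j) x := by
    intro f hf x hx i j
    have h2 : ContDiffAt ℝ (⊤ : ℕ∞) (fun y => fderiv ℝ f y) x :=
      (hf.fderiv_of_isOpen hU (by simp)).contDiffAt (hU.mem_nhds hx)
    exact contDiffAt_pi.mp (h2.clm_apply contDiffAt_const) i
  intro u hu
  have hUnhds : U ∈ nhds u := hU.mem_nhds hu
  have hσu : σ u ∈ U := hσU u hu
  have hσc : ContDiffAt ℝ (⊤ : ℕ∞) σ u := hσ.contDiffAt hUnhds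
  have hQc : ContDiffAt ℝ (⊤ : ℕ∞) Q (σ u) := hQ.contDiffAt (hU.mem_nhds hσu)
  have hQd : DifferentiableAt ℝ Q (σ u) := hQc.differentiableAt (by simp)
  have hσd : DifferentiableAt ℝ σ u := hσc.differentiableAt (by simp)
  -- α is differentiable at u
  have hαd : DifferentiableAt ℝ α u := by
    set g : (Fin n → ℝ) → (Fin n → ℝ) := fun y =>
      Matrix.vecMul
        (P y - Matrix.vecMul (Q (σ y)) (B y)
          - Matrix.vecMul (Matrix.vecMul y (jac n Q (σ y))) (C y))
        ((C y - jac n σ y * B y)⁻¹) with hg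
    have heq : α =ᶠ[nhds u] g := Filter.eventuallyEq_of_mem hUnhds hα
    have hgc : ContDiffAt ℝ (⊤ : ℕ∞) g u := by
      rw [contDiffAt_pi]
      intro k
      have hMinv : ∀ i j, ContDiffAt ℝ (⊤ : ℕ∞) (fun y => (C y - jac n σ y * B y)⁻¹ i j) u := by
        refine aux_contDiffAt_inv (fun i j => ?_) (hinv u hu)
        simp only [Matrix.sub_apply, Matrix.mul_apply]
        exact ((hC i j).contDiffAt hUnhds).sub
          (ContDiffAt.sum fun l _ =>
            (hjac σ hσ u hu i l).mul ((hB l j).contDiffAt hUnhds))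
      have hx : ∀ j, ContDiffAt ℝ (⊤ : ℕ∞) (fun y =>
          (P y - Matrix.vecMul (Q (σ y)) (B y)
            - Matrix.vecMul (Matrix.vecMul y (jac n Q (σ y))) (C y)) j) u := by
        intro j
        simp only [Pi.sub_apply, Matrix.vecMul, dotProduct]
        refine ContDiffAt.sub (ContDiffAt.sub ?_ ?_) ?_
        · exact contDiffAt_pi.mp (hP.contDiffAt hUnhds) j
        · refine ContDiffAt.sum fun i _ => ContDiffAt.mul ?_ ((hB i j).contDiffAt hUnhds)
          exact contDiffAt_pi.mp (hQc.comp u hσc) i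
        · refine ContDiffAt.sum fun i _ => ContDiffAt.mul ?_ ((hC i j).contDiffAt hUnhds)
          refine ContDiffAt.sum fun l _ => ContDiffAt.mul ?_ ?_
          · exact (ContinuousLinearMap.proj l : (Fin n → ℝ) →L[ℝ] ℝ).contDiff.contDiffAt
          · exact ((hjac Q hQ (σ u) hσu l i).comp u hσc)
      simp only [hg, Matrix.vecMul, dotProduct]
      exact ContDiffAt.sum fun j _ => (hx j).mul (hMinv j k)
    exact heq.differentiableAt_iff.mpr (hgc.differentiableAt (by simp))
  let fst := ContinuousLinearMap.fst ℝ (Fin n → ℝ) (Fin n → ℝ)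
  let snd := ContinuousLinearMap.snd ℝ (Fin n → ℝ) (Fin n → ℝ)
  let pr : Fin n → ((Fin n → ℝ) →L[ℝ] ℝ) := fun j => ContinuousLinearMap.proj j
  have hreq : r = fun p => (∑ j, Q p.2 j * p.1 j) + ∑ j, α p.1 j * (p.2 j - σ p.1 j) :=
    funext fun p => hr p.1 p.2
  have hQ2 : HasFDerivAt (fun p : (Fin n → ℝ) × (Fin n → ℝ) => Q p.2)
      ((fderiv ℝ Q (σ u)).comp snd) (u, σ u) :=
    (hQd.hasFDerivAt).comp (u, σ u) (snd.hasFDerivAt)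
  have hα2 : HasFDerivAt (fun p : (Fin n → ℝ) × (Fin n → ℝ) => α p.1)
      ((fderiv ℝ α u).comp fst) (u, σ u) :=
    (hαd.hasFDerivAt).comp (u, σ u) (fst.hasFDerivAt)
  have hσ2 : HasFDerivAt (fun p : (Fin n → ℝ) × (Fin n → ℝ) => σ p.1)
      ((fderiv ℝ σ u).comp fst) (u, σ u) :=
    (hσd.hasFDerivAt).comp (u, σ u) (fst.hasFDerivAt)
  have hrd : HasFDerivAt r
      ((∑ j, (Q (σ u) j • ((pr j).comp fst)
            + u j • ((pr j).comp ((fderiv ℝ Q (σ u)).comp snd))))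
        + ∑ j, (α u j • ((pr j).comp snd - (pr j).comp ((fderiv ℝ σ u).comp fst))
            + (σ u j - σ u j) • ((pr j).comp ((fderiv ℝ α u).comp fst)))) (u, σ u) := by
    rw [hreq]
    refine HasFDerivAt.add (HasFDerivAt.fun_sum fun j _ => ?_) (HasFDerivAt.fun_sum fun j _ => ?_)
    · exact HasFDerivAt.mul (((pr j).hasFDerivAt).comp (u, σ u) hQ2)
        (((pr j).comp fst).hasFDerivAt)
    · exact HasFDerivAt.mul (((pr j).hasFDerivAt).comp (u, σ u) hα2)
        ((((pr j).comp snd).hasFDerivAt).sub (((pr j).hasFDerivAt).comp (u, σ u) hσ2))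
  have hfd := hrd.fderiv
  have hd1 : ∀ k, fderiv ℝ r (u, σ u) (Pi.single k 1, 0)
      = Q (σ u) k - ∑ j, α u j * jac n σ u j k := by
    intro k
    rw [hfd]
    simp only [ContinuousLinearMap.add_apply, ContinuousLinearMap.sum_apply,
      ContinuousLinearMap.smul_apply, ContinuousLinearMap.sub_apply,
      ContinuousLinearMap.comp_apply, ContinuousLinearMap.coe_fst',
      ContinuousLinearMap.coe_snd', ContinuousLinearMap.proj_apply, fst, snd, pr,
      map_zero, Pi.zero_apply, smul_eq_mul, mul_zero, sub_self, zero_mul,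
      zero_sub, mul_neg, add_zero, zero_add, mul_one]
    simp only [jac, Matrix.of_apply]
    rw [Finset.sum_neg_distrib]
    simp [Pi.single_apply, mul_ite, Finset.sum_ite_eq', sub_eq_add_neg]
  have hd2 : ∀ k, fderiv ℝ r (u, σ u) (0, Pi.single k 1)
      = (∑ j, u j * jac n Q (σ u) j k) + α u k := by
    intro k
    rw [hfd]
    simp only [ContinuousLinearMap.add_apply, ContinuousLinearMap.sum_apply,
      ContinuousLinearMap.smul_apply, ContinuousLinearMap.sub_apply,
      ContinuousLinearMap.comp_apply, ContinuousLinearMap.coe_fst',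
      ContinuousLinearMap.coe_snd', ContinuousLinearMap.proj_apply, fst, snd, pr,
      map_zero, Pi.zero_apply, smul_eq_mul, mul_zero, sub_self, zero_mul,
      sub_zero, add_zero, zero_add, mul_one]
    simp only [jac, Matrix.of_apply]
    simp [Pi.single_apply, mul_ite, Finset.sum_ite_eq']
  have key1 : (fun k => fderiv ℝ r (u, σ u) (Pi.single k 1, 0))
      = Q (σ u) - α u ᵥ* jac n σ u := by
    funext k
    rw [hd1 k]
    simp [Matrix.vecMul, dotProduct]
  have key2 : (fun k => fderiv ℝ r (u, σ u) (0, Pi.single k 1))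
      = u ᵥ* jac n Q (σ u) + α u := by
    funext k
    rw [hd2 k]
    simp [Matrix.vecMul, dotProduct]
  rw [key1, key2]
  have hdet : IsUnit (C u - jac n σ u * B u).det :=
    (Matrix.isUnit_iff_isUnit_det _).mp (hinv u hu)
  have hαM : α u ᵥ* (C u - jac n σ u * B u)
      = P u - Q (σ u) ᵥ* B u - u ᵥ* jac n Q (σ u) ᵥ* C u := by
    rw [hα u hu, Matrix.vecMul_vecMul, Matrix.nonsing_inv_mul _ hdet, Matrix.vecMul_one]
  rw [Matrix.vecMul_sub] at hαM
  rw [Matrix.sub_vecMul, Matrix.add_vecMul, Matrix.vecMul_vecMul]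
  linear_combination (norm := module) hαM
end
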